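/- In a connected finite DAG (its underlying undirected graph is connected), for any two nodes u, w there is a finite sequence u = v₀, v₁, …, v_t = w such that consecutive nodes share a common source-node predecessor, with t at most the number of source nodes. -/

import Mathlib

private lemma exists_source_pred {V : Type*} [Fintype V] (E : V → V → Prop)
    (hacyc : ∀ v : V, ¬ Relation.TransGen E v v) (v : V) :
    ∃ s : V, (∀ z, ¬ E z s) ∧ Relation.ReflTransGen E s v := by
  haveI : IsIrrefl V (Relation.TransGen E) := ⟨hacyc⟩
  have hwf : WellFounded (fun a b : V => E a b) :=
    Subrelation.wf (fun h => Relation.TransGen.single h)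
      (Finite.wellFounded_of_trans_of_irrefl (Relation.TransGen E))
  induction v using hwf.induction with
  | _ v ih =>
    by_cases h : ∃ z, E z v
    · obtain ⟨z, hz⟩ := h
      obtain ⟨s, hs, hsv⟩ := ih z hz
      exact ⟨s, hs, hsv.tail hz⟩
    · exact ⟨v, fun z hz => h ⟨z, hz⟩, Relation.ReflTransGen.refl⟩

/-- In a connected finite DAG, any two nodes `u, w` are joined by a finite sequence
`u = v₀, v₁, …, v_t = w` such that consecutive nodes share a common source-node
predecessor, with `t` at most the number of source nodes. -/
theorem connected_dag_source_chain {V : Type*} [Fintype V] (E : V → V → Prop)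
    (hacyc : ∀ v : V, ¬ Relation.TransGen E v v)
    (hconn : ∀ u w : V, Relation.ReflTransGen (fun a b => E a b ∨ E b a) u w) :
    ∀ u w : V, ∃ t ≤ Nat.card {s : V // ∀ z : V, ¬ E z s}, ∃ f : ℕ → V,
      f 0 = u ∧ f t = w ∧
      ∀ i < t, ∃ s : V, (∀ z : V, ¬ E z s) ∧
        Relation.ReflTransGen E s (f i) ∧ Relation.ReflTransGen E s (f (i + 1)) := by
  classical
  intro u w
  set R : V → V → Prop := fun a b => ∃ s : V, (∀ z, ¬ E z s) ∧
    Relation.ReflTransGen E s a ∧ Relation.ReflTransGen E s b with hRdef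
  have hP : ∃ t : ℕ, ∃ f : ℕ → V, f 0 = u ∧ f t = w ∧ ∀ i < t, R (f i) (f (i+1)) := by
    have h := hconn u w
    induction h with
    | refl => exact ⟨0, fun _ => u, rfl, rfl, fun i hi => absurd hi (Nat.not_lt_zero i)⟩
    | @tail b c hbc hedge ih =>
      obtain ⟨t, f, h0, ht, hstep⟩ := ih
      have hRbc : R b c := by
        rcases hedge with he | he
        · obtain ⟨s, hs, hsb⟩ := exists_source_pred E hacyc b
          exact ⟨s, hs, hsb, hsb.tail he⟩
        · obtain ⟨s, hs, hsc⟩ := exists_source_pred E hacyc c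
          exact ⟨s, hs, hsc.tail he, hsc⟩
      refine ⟨t + 1, fun k => if k = t + 1 then c else f k, by simp [h0], by simp, ?_⟩
      intro i hi
      rcases Nat.lt_or_ge i t with h | h
      · simpa [Nat.ne_of_lt (Nat.lt_succ_of_lt h), Nat.ne_of_lt (Nat.succ_lt_succ h), Nat.ne_of_lt h]
          using hstep i h
      · have hit : i = t := le_antisymm (Nat.lt_succ_iff.mp hi) h
        have h1 : i ≠ t + 1 := by omega
        have h2 : i + 1 = t + 1 := by omega
        show R (if i = t + 1 then c else f i) (if i + 1 = t + 1 then c else f (i + 1))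
        rw [if_neg h1, if_pos h2, hit, ht]
        exact hRbc
  -- take minimal t
  let t := Nat.find hP
  obtain ⟨f, h0, ht, hstep⟩ := Nat.find_spec hP
  refine ⟨t, ?_, f, h0, ht, fun i hi => hstep i hi⟩
  -- distinct source witnesses
  have hchoose : ∀ i : Fin t, ∃ s : V, (∀ z, ¬ E z s) ∧
      Relation.ReflTransGen E s (f i) ∧ Relation.ReflTransGen E s (f (i+1)) :=
    fun i => hstep i i.isLt
  let g : Fin t → {s : V // ∀ z : V, ¬ E z s} :=
    fun i => ⟨(hchoose i).choose, (hchoose i).choose_spec.1⟩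
  have hginj : Function.Injective g := by
    intro i j hij
    by_contra hne
    wlog hlt : (i : ℕ) < (j : ℕ) generalizing i j
    · exact this hij.symm (Ne.symm hne) (by omega)
    -- build shorter chain
    have key : ∃ t' < t, ∃ f' : ℕ → V, f' 0 = u ∧ f' t' = w ∧
        ∀ k < t', R (f' k) (f' (k+1)) := by
      refine ⟨t - ((j : ℕ) - i), by omega,
        fun k => if k ≤ (i : ℕ) then f k else f (k + ((j : ℕ) - i)), ?_, ?_, ?_⟩
      · simp [h0]
      · have h1 : ¬ (t - ((j : ℕ) - i) ≤ (i : ℕ)) := by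
          have := j.isLt; omega
        simp only [h1, if_false]
        have : t - ((j : ℕ) - i) + ((j : ℕ) - i) = t := by have := j.isLt; omega
        rw [this, ht]
      · intro k hk
        rcases Nat.lt_or_ge k (i : ℕ) with h | h
        · simpa [Nat.le_of_lt h, Nat.succ_le_of_lt h] using hstep k (by have := i.isLt; omega)
        rcases Nat.eq_or_lt_of_le h with h' | h'
        · -- k = i : use shared source
          subst h'
          have h2 : ¬ ((i : ℕ) + 1 ≤ (i : ℕ)) := by omega
          simp only [le_refl, if_true, h2, if_false]
          have hkj : (i : ℕ) + 1 + ((j : ℕ) - (i : ℕ)) = (j : ℕ) + 1 := by omega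
          rw [hkj]
          obtain ⟨hs, hsi, _⟩ := (hchoose i).choose_spec
          obtain ⟨hs', _, hsj1⟩ := (hchoose j).choose_spec
          have heq : (hchoose i).choose = (hchoose j).choose := congrArg Subtype.val hij
          exact ⟨(hchoose i).choose, hs, hsi, heq ▸ hsj1⟩
        · have h2 : ¬ (k ≤ (i : ℕ)) := by omega
          have h3 : ¬ (k + 1 ≤ (i : ℕ)) := by omega
          simp only [h2, h3, if_false]
          have : k + ((j : ℕ) - i) + 1 = k + 1 + ((j : ℕ) - i) := by omega
          rw [← this]
          exact hstep _ (by have := j.isLt; omega)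
    obtain ⟨t', ht', hspec⟩ := key
    exact Nat.find_min hP ht' hspec
  calc t = Nat.card (Fin t) := by simp
    _ ≤ Nat.card {s : V // ∀ z : V, ¬ E z s} := Nat.card_le_card_of_injective g hginj
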